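/- Let p, q, r be integers with p > r ≥ 0 and q > 0, and set n := p + q + r. In gl_n(ℚ), let X := J_{(p,q+r)} + E_{p+r+1,p}. Then X is conjugate to J_{(p+q,r)} by a matrix of determinant 1, i.e., there exists g ∈ SL_n(ℚ) with g·X·g⁻¹ = J_{(p+q,r)} (when r = 0, with g·X·g⁻¹ = J_{(p+q)}). -/

import Mathlib

/-- Entry `(i, j)` (zero-based) of the block-diagonal matrix `diag(J_{η₁}, …, J_{ηₘ})`
built from *lower-triangular* nilpotent Jordan blocks `J_k` (which have entry `1` in
positions `(t+1, t)` for `0 ≤ t ≤ k-2` and `0` elsewhere). -/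
def jordanEntry : List ℕ → ℕ → ℕ → ℚ
  | [], _, _ => 0
  | k :: rest, i, j =>
    if i < k ∧ j < k then (if i = j + 1 then 1 else 0)
    else if k ≤ i ∧ k ≤ j then jordanEntry rest (i - k) (j - k)
    else 0

/-- The block-diagonal lower-triangular Jordan matrix `J_η ∈ gl_n(ℚ)` for a composition `η`. -/
def Jmat (n : ℕ) (η : List ℕ) : Matrix (Fin n) (Fin n) ℚ :=
  fun i j => jordanEntry η i j

namespace Stmt2Aux

/-- Entry of the conjugating matrix `P`. -/
def Pent (p q r i j : ℕ) : ℚ :=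
  if j < p then (if i = j then 1 else 0)
  else if j < p + q then (if i = j + r then 1 else 0)
  else (-1 : ℚ) ^ (q + r - 1) *
    ((if i + q = j then 1 else 0) - (if i + q + r = j then 1 else 0))

/-- Entry of the unipotent upper-triangular factor `L`. -/
def Lent (p r i j : ℕ) : ℚ :=
  (if i = j then 1 else 0) - (if j = i + r ∧ p ≤ j ∧ j < p + r then 1 else 0)

/-- Entry of the scaled-permutation factor `Q`. -/
def Qent (p q r i j : ℕ) : ℚ :=
  if j < p then (if i = j then 1 else 0)
  else if j < p + q then (if i = j + r then 1 else 0)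
  else (-1 : ℚ) ^ (q + r - 1) * (if i + q = j then 1 else 0)

def Pm (p q r : ℕ) : Matrix (Fin (p + q + r)) (Fin (p + q + r)) ℚ :=
  Matrix.of fun i j => Pent p q r i j

def Lm (p q r : ℕ) : Matrix (Fin (p + q + r)) (Fin (p + q + r)) ℚ :=
  Matrix.of fun i j => Lent p r i j

def Qm (p q r : ℕ) : Matrix (Fin (p + q + r)) (Fin (p + q + r)) ℚ :=
  Matrix.of fun i j => Qent p q r i j

lemma jordan_two (a b i j : ℕ) (hi : i < a + b) (hj : j < a + b) :
    jordanEntry [a, b] i j = if i = j + 1 ∧ i ≠ a then 1 else 0 := by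
  simp only [jordanEntry]
  split_ifs <;> first | rfl | omega


set_option maxHeartbeats 3000000 in
/-- The key scalar identity expressing `X·P = P·J` entrywise. -/
lemma key (p q r : ℕ) (hrp : r < p) (hq : 0 < q) (i j : ℕ)
    (hi : i < p + q + r) (hj : j < p + q + r) :
    (if 1 ≤ i ∧ i ≠ p then Pent p q r (i - 1) j else 0)
      + (if i = p + r then Pent p q r (p - 1) j else 0)
    = if j + 1 < p + q + r then
        (if j + 1 ≠ p + q then Pent p q r i (j + 1) else 0)
      else 0 := by
  unfold Pent
  split_ifs <;> first | ring1 | (exfalso; omega)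

/-- The key scalar identity expressing `L·Q = P` entrywise. -/
lemma key2 (p q r : ℕ) (hrp : r < p) (hq : 0 < q) (i j : ℕ)
    (hi : i < p + q + r) (hj : j < p + q + r) :
    Qent p q r i j
      - (if i + r < p + q + r then
          (if p ≤ i + r ∧ i + r < p + r then Qent p q r (i + r) j else 0)
        else 0)
    = Pent p q r i j := by
  unfold Pent Qent
  split_ifs <;> first | ring1 | (exfalso; omega)

open Finset in
/-- Matrix-level: `X * P = P * J_{(p+q,r)}`. -/
lemma XP_eq_PJ (p q r : ℕ) (hrp : r < p) (hq : 0 < q)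
    (X : Matrix (Fin (p + q + r)) (Fin (p + q + r)) ℚ)
    (hX : X = Jmat (p + q + r) [p, q + r] +
      Matrix.single ⟨p + r, by have := hq; omega⟩ ⟨p - 1, by have := hq; omega⟩ 1) :
    X * Pm p q r = Pm p q r * Jmat (p + q + r) [p + q, r] := by
  have hXe : ∀ i k : Fin (p + q + r), X i k =
      (if (k : ℕ) = (i : ℕ) - 1 then
        (if 1 ≤ (i : ℕ) ∧ (i : ℕ) ≠ p then (1 : ℚ) else 0) else 0)
      + (if (k : ℕ) = p - 1 then (if (i : ℕ) = p + r then (1 : ℚ) else 0) else 0) := by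
    intro i k
    rw [hX]
    simp only [Matrix.add_apply, Jmat, Matrix.single, Matrix.of_apply]
    rw [show jordanEntry [p, q + r] ↑i ↑k
        = if (i : ℕ) = (k : ℕ) + 1 ∧ (i : ℕ) ≠ p then 1 else 0 from
      jordan_two p (q + r) i k (by omega) (by omega)]
    simp only [Fin.ext_iff]
    split_ifs <;> first | ring1 | (exfalso; omega)
  have hJe : ∀ k j : Fin (p + q + r), jordanEntry [p + q, r] ↑k ↑j =
      if (k : ℕ) = (j : ℕ) + 1 then (if (j : ℕ) + 1 ≠ p + q then (1 : ℚ) else 0) else 0 := by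
    intro k j
    rw [jordan_two (p + q) r k j (by omega) (by omega)]
    split_ifs <;> first | rfl | (exfalso; omega)
  ext i j
  rw [Matrix.mul_apply, Matrix.mul_apply]
  have hL : ∑ k : Fin (p + q + r), X i k * Pm p q r k j
      = ∑ t ∈ range (p + q + r),
          ((if t = (i : ℕ) - 1 then (if 1 ≤ (i : ℕ) ∧ (i : ℕ) ≠ p then (1 : ℚ) else 0) else 0)
            + (if t = p - 1 then (if (i : ℕ) = p + r then (1 : ℚ) else 0) else 0))
          * Pent p q r t j := by
    rw [← Fin.sum_univ_eq_sum_range]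
    exact Finset.sum_congr rfl fun k _ => by rw [hXe i k]; rfl
  have hR : ∑ k : Fin (p + q + r), Pm p q r i k * Jmat (p + q + r) [p + q, r] k j
      = ∑ t ∈ range (p + q + r),
          Pent p q r i t *
            (if t = (j : ℕ) + 1 then (if (j : ℕ) + 1 ≠ p + q then (1 : ℚ) else 0) else 0) := by
    rw [← Fin.sum_univ_eq_sum_range]
    exact Finset.sum_congr rfl fun k _ => by
      show Pent p q r ↑i ↑k * jordanEntry [p + q, r] ↑k ↑j = _
      rw [hJe k j]
  rw [hL, hR]
  simp only [add_mul, ite_mul, zero_mul, mul_ite, mul_zero]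
  rw [Finset.sum_add_distrib, Finset.sum_ite_eq' (range (p + q + r)),
    Finset.sum_ite_eq' (range (p + q + r)), Finset.sum_ite_eq' (range (p + q + r))]
  simp only [mem_range]
  rw [if_pos (show (i : ℕ) - 1 < p + q + r by omega),
    if_pos (show p - 1 < p + q + r by omega)]
  simp only [one_mul, mul_one]
  exact key p q r hrp hq i j i.isLt j.isLt

/-- Matrix-level: `L * Q = P`. -/
lemma LQ_eq_P (p q r : ℕ) (hrp : r < p) (hq : 0 < q) :
    Lm p q r * Qm p q r = Pm p q r := by
  have hLe : ∀ i k : Fin (p + q + r), Lm p q r i k =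
      (if (k : ℕ) = (i : ℕ) then (1 : ℚ) else 0)
      - (if (k : ℕ) = (i : ℕ) + r then
          (if p ≤ (i : ℕ) + r ∧ (i : ℕ) + r < p + r then (1 : ℚ) else 0) else 0) := by
    intro i k
    show Lent p r ↑i ↑k = _
    unfold Lent
    split_ifs <;> first | ring1 | (exfalso; omega)
  ext i j
  rw [Matrix.mul_apply]
  have hL : ∑ k : Fin (p + q + r), Lm p q r i k * Qm p q r k j
      = ∑ t ∈ Finset.range (p + q + r),
          ((if t = (i : ℕ) then (1 : ℚ) else 0)
            - (if t = (i : ℕ) + r then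
                (if p ≤ (i : ℕ) + r ∧ (i : ℕ) + r < p + r then (1 : ℚ) else 0) else 0))
          * Qent p q r t j := by
    rw [← Fin.sum_univ_eq_sum_range]
    exact Finset.sum_congr rfl fun k _ => by rw [hLe i k]; rfl
  rw [hL]
  simp only [sub_mul, ite_mul, zero_mul, one_mul]
  rw [Finset.sum_sub_distrib, Finset.sum_ite_eq' (Finset.range (p + q + r)),
    Finset.sum_ite_eq' (Finset.range (p + q + r))]
  simp only [Finset.mem_range]
  rw [if_pos (show (i : ℕ) < p + q + r by omega)]
  show _ = Pent p q r ↑i ↑j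
  exact key2 p q r hrp hq i j i.isLt j.isLt

lemma det_Lm (p q r : ℕ) : (Lm p q r).det = 1 := by
  have h : (Lm p q r).BlockTriangular id := by
    intro i j hij
    show Lent p r ↑i ↑j = 0
    unfold Lent
    have : (j : ℕ) < (i : ℕ) := hij
    split_ifs <;> first | ring1 | (exfalso; omega)
  rw [Matrix.det_of_upperTriangular h]
  apply Finset.prod_eq_one
  intro i _
  show Lent p r ↑i ↑i = 1
  unfold Lent
  split_ifs <;> first | ring1 | (exfalso; omega)

/-- The permutation `τ`. -/
def τfun (p q r i : ℕ) : ℕ := if i < p then i else if i < p + r then i + q else i - r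

def τ (p q r : ℕ) (hrp : r < p) (hq : 0 < q) : Equiv.Perm (Fin (p + q + r)) where
  toFun i := ⟨τfun p q r i, by unfold τfun; split_ifs <;> omega⟩
  invFun j := ⟨if (j : ℕ) < p then j else if (j : ℕ) < p + q then (j : ℕ) + r else (j : ℕ) - q,
    by split_ifs <;> omega⟩
  left_inv i := by
    apply Fin.ext
    simp only [τfun]
    have := i.isLt
    split_ifs <;> omega
  right_inv j := by
    apply Fin.ext
    simp only [τfun]
    have := j.isLt
    split_ifs <;> omega

def dfun (p q r : ℕ) : Fin (p + q + r) → ℚ :=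
  fun j => if (j : ℕ) < p + q then 1 else (-1 : ℚ) ^ (q + r - 1)

lemma Qm_eq (p q r : ℕ) (hrp : r < p) (hq : 0 < q) :
    Qm p q r = (Matrix.diagonal (dfun p q r)).submatrix (τ p q r hrp hq) id := by
  ext i j
  rw [Matrix.submatrix_apply, Matrix.diagonal_apply, id]
  show Qent p q r ↑i ↑j = _
  have hτ : ((τ p q r hrp hq) i : ℕ) = τfun p q r ↑i := rfl
  have hv : ((τ p q r hrp hq) i = j) ↔ (τfun p q r ↑i = (j : ℕ)) := by
    rw [Fin.ext_iff, hτ]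
  have hi := i.isLt
  have hj := j.isLt
  simp only [hv, dfun, hτ]
  unfold Qent τfun
  split_ifs <;> first | ring1 | (exfalso; omega)


lemma prod_dfun (p q r : ℕ) :
    ∏ i, dfun p q r i = (-1 : ℚ) ^ ((q + r - 1) * r) := by
  unfold dfun
  rw [Fin.prod_univ_eq_prod_range
    (fun t => if t < p + q then (1 : ℚ) else (-1 : ℚ) ^ (q + r - 1)) (p + q + r)]
  rw [Finset.prod_range_add]
  rw [Finset.prod_eq_one (fun x hx => if_pos (Finset.mem_range.mp hx)), one_mul]
  rw [Finset.prod_congr rfl (fun x hx => if_neg (by omega))]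
  rw [Finset.prod_const, Finset.card_range, ← pow_mul]

lemma finRotate_pow_val (m k : ℕ) (x : Fin (m + 1)) :
    (((finRotate (m + 1)) ^ k) x).val = (x.val + k) % (m + 1) := by
  induction k with
  | zero => simp [Nat.mod_eq_of_lt x.isLt]
  | succ k ih =>
    rw [pow_succ', Equiv.Perm.mul_apply, finRotate_succ_apply, Fin.val_add, ih,
      Fin.val_one', Nat.mod_add_mod, Nat.add_mod_mod, Nat.add_assoc]

lemma finRotate_pow_val' (m k : ℕ) (hm : 0 < m) (x : Fin m) :
    (((finRotate m) ^ k) x).val = (x.val + k) % m := by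
  obtain ⟨m', rfl⟩ : ∃ m', m = m' + 1 := ⟨m - 1, by omega⟩
  exact finRotate_pow_val m' k x

lemma tau_eq (p q r : ℕ) (hrp : r < p) (hq : 0 < q) :
    τ p q r hrp hq
      = (finSumFinEquiv.trans (finCongr (show p + (q + r) = p + q + r by omega))).permCongr
          (Equiv.sumCongr (1 : Equiv.Perm (Fin p)) ((finRotate (q + r)) ^ q)) := by
  set e := finSumFinEquiv.trans (finCongr (show p + (q + r) = p + q + r by omega)) with he
  apply Equiv.ext
  intro j
  obtain ⟨x, rfl⟩ := e.surjective j
  rw [Equiv.permCongr_apply, Equiv.symm_apply_apply]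
  cases x with
  | inl a =>
    have hval : ((e (Sum.inl a)) : ℕ) = (a : ℕ) := by
      simp [he, finSumFinEquiv_apply_left]
    simp only [Equiv.sumCongr_apply, Sum.map_inl, Equiv.Perm.coe_one, id]
    apply Fin.ext
    show τfun p q r ↑(e (Sum.inl a)) = _
    rw [hval]
    unfold τfun
    have := a.isLt
    split_ifs <;> omega
  | inr b =>
    have hval : ((e (Sum.inr b)) : ℕ) = p + (b : ℕ) := by
      simp [he, finSumFinEquiv_apply_right]
    have hval2 : ((e (Sum.inr (((finRotate (q + r)) ^ q) b))) : ℕ)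
        = p + (((b : ℕ) + q) % (q + r)) := by
      simp [he, finSumFinEquiv_apply_right, finRotate_pow_val' (q + r) q (by omega) b]
    simp only [Equiv.sumCongr_apply, Sum.map_inr]
    apply Fin.ext
    show τfun p q r ↑(e (Sum.inr b)) = _
    rw [hval, hval2]
    have hb := b.isLt
    unfold τfun
    rcases Nat.lt_or_ge (b : ℕ) r with hbr | hbr
    · rw [if_neg (by omega), if_pos (by omega), Nat.mod_eq_of_lt (by omega)]
      omega
    · rw [if_neg (by omega), if_neg (by omega),
        Nat.mod_eq_sub_mod (by omega), Nat.mod_eq_of_lt (by omega)]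
      omega

lemma sign_tau (p q r : ℕ) (hrp : r < p) (hq : 0 < q) :
    Equiv.Perm.sign (τ p q r hrp hq) = (-1 : ℤˣ) ^ ((q + r - 1) * q) := by
  rw [tau_eq p q r hrp hq, Equiv.Perm.sign_permCongr, Equiv.Perm.sign_sumCongr,
    map_one, one_mul, map_pow]
  obtain ⟨m, hm⟩ : ∃ m, q + r = m + 1 := ⟨q + r - 1, by omega⟩
  rw [hm, sign_finRotate, ← pow_mul, Nat.add_sub_cancel]

lemma det_Qm (p q r : ℕ) (hrp : r < p) (hq : 0 < q) : (Qm p q r).det = 1 := by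
  rw [Qm_eq p q r hrp hq, Matrix.det_permute, Matrix.det_diagonal, prod_dfun,
    sign_tau p q r hrp hq]
  push_cast
  rw [← pow_add]
  have : (q + r - 1) * q + (q + r - 1) * r = (q + r - 1) * ((q + r - 1) + 1) := by
    have : q + r = (q + r - 1) + 1 := by omega
    rw [← Nat.mul_add, ← this]
  rw [this]
  exact Even.neg_one_pow (Nat.even_mul_succ_self _)

lemma det_Pm (p q r : ℕ) (hrp : r < p) (hq : 0 < q) : (Pm p q r).det = 1 := by
  rw [← LQ_eq_P p q r hrp hq, Matrix.det_mul, det_Lm, det_Qm p q r hrp hq, one_mul]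

end Stmt2Aux

open Stmt2Aux in
/-- Let `p, q, r` be integers with `p > r ≥ 0` and `q > 0`, `n = p + q + r`.
In `gl_n(ℚ)` let `X = J_{(p,q+r)} + E_{p+r+1,p}` (one-based indices for the elementary
matrix).  Then `X` is conjugate to `J_{(p+q,r)}` by a matrix of determinant `1`, i.e. there
is `g ∈ SL_n(ℚ)` with `g * X * g⁻¹ = J_{(p+q,r)}` (for `r = 0` the list `[p+q, r]` yields
the same matrix as `[p+q]`). -/
theorem stmt_2 (p q r : ℕ) (hrp : r < p) (hq : 0 < q)
    (X : Matrix (Fin (p + q + r)) (Fin (p + q + r)) ℚ)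
    (hX : X = Jmat (p + q + r) [p, q + r] +
      Matrix.single ⟨p + r, by omega⟩ ⟨p - 1, by omega⟩ 1) :
    ∃ g : Matrix.SpecialLinearGroup (Fin (p + q + r)) ℚ,
      (g : Matrix (Fin (p + q + r)) (Fin (p + q + r)) ℚ) * X *
        ((g⁻¹ : Matrix.SpecialLinearGroup (Fin (p + q + r)) ℚ) :
          Matrix (Fin (p + q + r)) (Fin (p + q + r)) ℚ)
        = Jmat (p + q + r) [p + q, r] := by
  have hdet : (Pm p q r).det = 1 := det_Pm p q r hrp hq
  refine ⟨(⟨Pm p q r, hdet⟩ : Matrix.SpecialLinearGroup (Fin (p + q + r)) ℚ)⁻¹, ?_⟩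
  erw [inv_inv]
  set h : Matrix.SpecialLinearGroup (Fin (p + q + r)) ℚ := ⟨Pm p q r, hdet⟩ with hh
  have h1 : (h : Matrix (Fin (p + q + r)) (Fin (p + q + r)) ℚ) = Pm p q r := rfl
  have h2 : ((h⁻¹ : Matrix.SpecialLinearGroup (Fin (p + q + r)) ℚ) :
      Matrix (Fin (p + q + r)) (Fin (p + q + r)) ℚ) * Pm p q r = 1 := by
    rw [← h1, ← Matrix.SpecialLinearGroup.coe_mul, inv_mul_cancel,
      Matrix.SpecialLinearGroup.coe_one]
  rw [h1, mul_assoc, XP_eq_PJ p q r hrp hq X hX, ← mul_assoc, h2, one_mul]
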